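/- arXiv:2211.04301 — 4 statements merged into one kernel-verified Lean document; each statement's English description precedes it below -/
import Mathlib

section
/- If x and x' are nonzero floating-point numbers with precision p such that 10^(−δ) ≤ x/x' ≤ 10^δ, then x ≈_{δ+2} x', i.e., their exponents differ by less than δ+2. -/
/-! Both mantissas lie in `[1/10, 1)`, so their ratio lies strictly between `1/10` and `10`.
Hence `x / x' = (m / m') * 10 ^ (α - α')` can only lie in `[10 ^ (-δ), 10 ^ δ]` if
`10 ^ (α - α' - 1) < 10 ^ δ` and `10 ^ (-δ) < 10 ^ (α - α' + 1)`, i.e. `|α - α'| ≤ δ`. -/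

open Set

lemma div_mem_Ioo_of_mem_Ico_inv {b m m' : ℝ} (hb : 0 < b)
    (hm : m ∈ Ico b⁻¹ 1) (hm' : m' ∈ Ico b⁻¹ 1) : m / m' ∈ Ioo b⁻¹ b := by
  have hm'_pos : 0 < m' := (inv_pos.mpr hb).trans_le hm'.1
  constructor
  · rw [lt_div_iff₀ hm'_pos]
    calc b⁻¹ * m' < b⁻¹ := mul_lt_of_lt_one_right (inv_pos.mpr hb) hm'.2
      _ ≤ m := hm.1
  · rw [div_lt_iff₀ hm'_pos]
    calc m < 1 := hm.2
      _ = b * b⁻¹ := (mul_inv_cancel₀ hb.ne').symm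
      _ ≤ b * m' := mul_le_mul_of_nonneg_left hm'.1 hb.le

lemma abs_le_of_mul_zpow_mem_Icc {b r : ℝ} {e n : ℤ} (hb : 1 < b) (hr : r ∈ Ioo b⁻¹ b)
    (h : r * b ^ e ∈ Icc (b ^ (-n)) (b ^ n)) : |e| ≤ n := by
  have hb₀ : b ≠ 0 := (zero_lt_one.trans hb).ne'
  have hpow : 0 < b ^ e := zpow_pos (zero_lt_one.trans hb) e
  have hupper : b ^ (e - 1) < b ^ n :=
    calc b ^ (e - 1) = b⁻¹ * b ^ e := by rw [zpow_sub_one₀ hb₀, mul_comm]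
      _ < r * b ^ e := mul_lt_mul_of_pos_right hr.1 hpow
      _ ≤ b ^ n := h.2
  have hlower : b ^ (-n) < b ^ (e + 1) :=
    calc b ^ (-n) ≤ r * b ^ e := h.1
      _ < b * b ^ e := mul_lt_mul_of_pos_right hr.2 hpow
      _ = b ^ (e + 1) := by rw [zpow_add_one₀ hb₀, mul_comm]
  rw [zpow_lt_zpow_iff_right₀ hb] at hupper hlower
  rw [abs_le]
  omega

theorem fp_ratio_close_general (δ : ℕ) (x x' : ℝ) (m m' : ℝ) (α α' : ℤ)
    (hx : x = m * (10:ℝ) ^ α) (hx' : x' = m' * (10:ℝ) ^ α')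
    (hm : m ∈ Set.Ico (0.1 : ℝ) 1) (hm' : m' ∈ Set.Ico (0.1 : ℝ) 1)
    (hratio : (10:ℝ) ^ (-(δ : ℤ)) ≤ x / x' ∧ x / x' ≤ (10:ℝ) ^ (δ : ℤ)) :
    |α - α'| < (δ : ℤ) + 2 := by
  have hinv : (0.1 : ℝ) = 10⁻¹ := by norm_num
  rw [hinv] at hm hm'
  rw [hx, hx', mul_div_mul_comm, ← zpow_sub₀ (by norm_num)] at hratio
  have hle := abs_le_of_mul_zpow_mem_Icc (by norm_num)
    (div_mem_Ioo_of_mem_Ico_inv (by norm_num) hm hm') hratio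
  omega

/-- If `x` and `x'` are nonzero precision-`p` base-10 floating-point numbers
with `10^(-δ) ≤ x/x' ≤ 10^δ`, then their exponents differ by less than `δ + 2`. -/
theorem fp_ratio_close (p : ℕ) (δ : ℕ) (x x' : ℝ) (m m' : ℝ) (α α' : ℤ)
    (hx : x = m * (10:ℝ) ^ α) (hx' : x' = m' * (10:ℝ) ^ α')
    (hm : m ∈ Set.Ico (0.1 : ℝ) 1) (hm' : m' ∈ Set.Ico (0.1 : ℝ) 1)
    (hmd : ∃ k : ℤ, m = (k : ℝ) / 10 ^ p) (hmd' : ∃ k : ℤ, m' = (k : ℝ) / 10 ^ p)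
    (hratio : (10:ℝ) ^ (-(δ : ℤ)) ≤ x / x' ∧ x / x' ≤ (10:ℝ) ^ (δ : ℤ)) :
    |α - α'| < (δ : ℤ) + 2 :=
  fp_ratio_close_general δ x x' m m' α α' hx hx' hm hm' hratio
end

section
/- Let [·] be a rounding function to precision-1 base-10 floating-point numbers that rounds to the nearest representable number. For u = 10^{c₁} and v = 10^{c₂} with c₁, c₂ ∈ ℕ, define temp = [u + v], temp2 = [temp − u], w = [1.1·temp2]. Then w = v if v ≥ u and w = 0 if v < u. -/
def FP1 : Set ℝ := {y | ∃ m : ℕ, m ≤ 9 ∧ ∃ α : ℤ, y = ((m : ℝ) / 10) * (10:ℝ) ^ α}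

/-!
Round to nearest fixes every representable number, and it sends `x` to `10^β` as soon as
`0.95·10^β < x < 1.15·10^β`, because the neighbours of `10^β` among precision-1 numbers are
`0.9·10^β` and `2·10^β`. If `u < v` then `u ≤ v/10`, so `u + v` rounds to `v`, `v - u` is either
`0.9·v` (representable) or rounds to `v`, and `1.1` times either rounds to `v`. If `u = v` the
computation is exact up to the last step `[1.1·v] = v`. If `v < u`, then `u + v` rounds to `u`
and everything after is `0`.
-/

theorem natCast_mul_zpow_mem_FP1 {m : ℕ} (hm : m ≤ 9) (β : ℤ) :
    (m : ℝ) * (10:ℝ) ^ β ∈ FP1 :=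
  ⟨m, hm, β + 1, by rw [zpow_add_one₀ (by norm_num)]; ring⟩

theorem zpow_mem_FP1 (β : ℤ) : (10:ℝ) ^ β ∈ FP1 := by
  simpa using natCast_mul_zpow_mem_FP1 (by norm_num : 1 ≤ 9) β

theorem zero_mem_FP1 : (0:ℝ) ∈ FP1 := by
  simpa using natCast_mul_zpow_mem_FP1 (by norm_num : 0 ≤ 9) 0

theorem ten_zpow_mul_le_zpow {a b : ℤ} (k : ℤ) (h : a + k ≤ b) :
    (10:ℝ) ^ a * 10 ^ k ≤ (10:ℝ) ^ b := by
  rw [← zpow_add₀ (by norm_num)]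
  exact zpow_le_zpow_right₀ (by norm_num) h

theorem eq_zpow_of_mem_FP1 {z : ℝ} (hz : z ∈ FP1) {β : ℤ} (h₁ : 0.9 * (10:ℝ) ^ β < z)
    (h₂ : z < 2 * (10:ℝ) ^ β) : z = (10:ℝ) ^ β := by
  obtain ⟨m, hm, α, rfl⟩ := hz
  have hm9 : (m : ℝ) ≤ 9 := by exact_mod_cast hm
  have hpos : (0:ℝ) < (10:ℝ) ^ β := by positivity
  rcases lt_trichotomy α (β + 1) with hα | rfl | hα
  · have hle : (10:ℝ) ^ α ≤ (10:ℝ) ^ β := zpow_le_zpow_right₀ (by norm_num) (by omega)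
    nlinarith [mul_le_mul_of_nonneg_left hle (by positivity : (0:ℝ) ≤ (m : ℝ) / 10)]
  · rw [zpow_add_one₀ (by norm_num)] at h₁ h₂ ⊢
    have hm₀ : 0 < m := by exact_mod_cast (show (0:ℝ) < m by nlinarith)
    have hm₂ : m < 2 := by exact_mod_cast (show (m : ℝ) < 2 by nlinarith)
    obtain rfl : m = 1 := by omega
    ring
  · have hle := ten_zpow_mul_le_zpow 2 (show β + 2 ≤ α by omega)
    have hm1 : (1:ℝ) ≤ m := by
      rcases Nat.eq_zero_or_pos m with rfl | h
      · norm_num at h₁; linarith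
      · exact_mod_cast h
    norm_num at hle
    nlinarith

structure IsRoundToNearest (S : Set ℝ) (round : ℝ → ℝ) : Prop where
  mem : ∀ x, round x ∈ S
  nearest : ∀ x y, y ∈ S → |x - round x| ≤ |x - y|

namespace IsRoundToNearest

variable {S : Set ℝ} {round : ℝ → ℝ}

theorem eq_self_of_mem (hr : IsRoundToNearest S round) {x : ℝ} (hx : x ∈ S) :
    round x = x := by
  have h := hr.nearest x x hx
  rw [sub_self, abs_zero, abs_nonpos_iff, sub_eq_zero] at h
  exact h.symm

/-- `round x` lies within `|x - y|` of `x`, hence in `(a, b)`, where only `y` belongs to `S`. -/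
theorem eq_of_isolated (hr : IsRoundToNearest S round) {a b x y : ℝ} (hy : y ∈ S)
    (hiso : ∀ z ∈ S, a < z → z < b → z = y)
    (ha : a < x - |x - y|) (hb : x + |x - y| < b) : round x = y := by
  have h := abs_le.mp ((abs_sub_comm _ _).trans_le (hr.nearest x y hy))
  exact hiso _ (hr.mem x) (by linarith) (by linarith)

theorem eq_zpow (hr : IsRoundToNearest FP1 round) {x : ℝ} {β : ℤ}
    (h₁ : 0.95 * (10:ℝ) ^ β < x) (h₂ : x < 1.15 * (10:ℝ) ^ β) : round x = (10:ℝ) ^ β := by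
  refine hr.eq_of_isolated (zpow_mem_FP1 β) (fun _ hz ↦ eq_zpow_of_mem_FP1 hz) ?_ ?_ <;>
    cases abs_cases (x - (10:ℝ) ^ β) <;> linarith

theorem one_point_one_mul_zpow (hr : IsRoundToNearest FP1 round) (β : ℤ) :
    round (1.1 * (10:ℝ) ^ β) = (10:ℝ) ^ β := by
  have : (0:ℝ) < (10:ℝ) ^ β := by positivity
  exact hr.eq_zpow (by linarith) (by linarith)

theorem zpow_add_zpow_of_lt (hr : IsRoundToNearest FP1 round) {a b : ℤ} (hab : a < b) :
    round ((10:ℝ) ^ a + 10 ^ b) = (10:ℝ) ^ b := by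
  have hle := ten_zpow_mul_le_zpow 1 (show a + 1 ≤ b by omega)
  have : (0:ℝ) < (10:ℝ) ^ a := by positivity
  rw [zpow_one] at hle
  exact hr.eq_zpow (by linarith) (by linarith)

theorem one_point_one_mul_zpow_sub_zpow_of_lt (hr : IsRoundToNearest FP1 round) {a b : ℤ}
    (hab : a < b) : round (1.1 * round ((10:ℝ) ^ b - 10 ^ a)) = (10:ℝ) ^ b := by
  have : (0:ℝ) < (10:ℝ) ^ a := by positivity
  rcases (show a + 1 = b ∨ a + 2 ≤ b by omega) with rfl | hab₂
  · have hnext : (10:ℝ) ^ (a + 1) = 10 ^ a * 10 := zpow_add_one₀ (by norm_num) a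
    have hsub : (10:ℝ) ^ (a + 1) - 10 ^ a = (9:ℕ) * 10 ^ a := by
      rw [hnext]; push_cast; ring
    rw [hsub, hr.eq_self_of_mem (natCast_mul_zpow_mem_FP1 le_rfl a)]
    exact hr.eq_zpow (by push_cast; linarith) (by push_cast; linarith)
  · have hle := ten_zpow_mul_le_zpow 2 hab₂
    norm_num at hle
    rw [hr.eq_zpow (x := (10:ℝ) ^ b - 10 ^ a) (β := b) (by linarith) (by linarith)]
    exact hr.one_point_one_mul_zpow b

end IsRoundToNearest

theorem filter_plus_correct_general (round : ℝ → ℝ)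
    (hmem : ∀ x : ℝ, round x ∈ FP1)
    (hnear : ∀ x y : ℝ, y ∈ FP1 → |x - round x| ≤ |x - y|)
    (c₁ c₂ : ℕ) (u v temp temp2 w : ℝ)
    (hu : u = (10:ℝ) ^ c₁) (hv : v = (10:ℝ) ^ c₂)
    (htemp : temp = round (u + v))
    (htemp2 : temp2 = round (temp - u))
    (hw : w = round ((1.1 : ℝ) * temp2)) :
    (u ≤ v → w = v) ∧ (v < u → w = 0) := by
  have hr : IsRoundToNearest FP1 round := ⟨hmem, hnear⟩
  have hten : (1:ℝ) < 10 := by norm_num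
  rw [← zpow_natCast] at hu hv
  subst hu hv htemp htemp2 hw
  refine ⟨fun huv ↦ ?_, fun hvu ↦ ?_⟩
  · rcases ((zpow_le_zpow_iff_right₀ hten).mp huv).eq_or_lt with hc | hc
    · have hdouble : (2:ℝ) * 10 ^ (c₁ : ℤ) ∈ FP1 := by
        simpa using natCast_mul_zpow_mem_FP1 (m := 2) (by norm_num) c₁
      rw [← hc, ← two_mul, hr.eq_self_of_mem hdouble, two_mul, add_sub_cancel_right,
        hr.eq_self_of_mem (zpow_mem_FP1 _), hr.one_point_one_mul_zpow]
    · rw [hr.zpow_add_zpow_of_lt hc]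
      exact hr.one_point_one_mul_zpow_sub_zpow_of_lt hc
  · have hc := (zpow_lt_zpow_iff_right₀ hten).mp hvu
    rw [add_comm, hr.zpow_add_zpow_of_lt hc, sub_self, hr.eq_self_of_mem zero_mem_FP1,
      mul_zero, hr.eq_self_of_mem zero_mem_FP1]

/-- For `u = 10^{c₁}`, `v = 10^{c₂}` and a round-to-nearest rounding function `[·]`
onto precision-1 base-10 floating-point numbers (ties broken upwards), setting
`temp = [u + v]`, `temp2 = [temp − u]`, `w = [1.1·temp2]` yields
`w = v` if `v ≥ u` and `w = 0` if `v < u`. -/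
theorem filter_plus_correct (round : ℝ → ℝ)
    (hmem : ∀ x : ℝ, round x ∈ FP1)
    (hnear : ∀ x y : ℝ, y ∈ FP1 → |x - round x| ≤ |x - y|)
    (htie : ∀ x y : ℝ, y ∈ FP1 → |x - round x| = |x - y| → y ≤ round x)
    (c₁ c₂ : ℕ) (u v temp temp2 w : ℝ)
    (hu : u = (10:ℝ) ^ c₁) (hv : v = (10:ℝ) ^ c₂)
    (htemp : temp = round (u + v))
    (htemp2 : temp2 = round (temp - u))
    (hw : w = round ((1.1 : ℝ) * temp2)) :
    (u ≤ v → w = v) ∧ (v < u → w = 0) :=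
  filter_plus_correct_general round hmem hnear c₁ c₂ u v temp temp2 w hu hv htemp htemp2 hw
end

section
/- Let M be a nonnegative matrix whose graph is strongly connected with all entries of M^C positive for some C, let the rounding function be log-bounded with constant c, and let m bound entries of M as above. Then for all times t and all coordinates q, q': x^{(t+C)}_q / x^{(t+C)}_{q'} ≤ d^C (mc)^{2C}, where d is the dimension; hence all coordinates of the rounded orbit have exponents within ⌈log₁₀(d^C (mc)^{2C})⌉ + 2 of each other. -/
/-!
Rounding perturbs each step of the orbit by a factor in `[1/c, c]`, so after `C` steps
`x^{(t+C)}` agrees with `M^C x^{(t)}` up to a factor `c^C` in each coordinate. Every entry of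
`M^C` is at most `(dm)^C`, while every positive entry, being a sum of products of `C` positive
entries of `M`, is at least `m^{-C}`. Since all entries of `M^C` are positive, any two rows of
`M^C` are comparable up to `d^C m^{2C}`, and so are any two coordinates of `M^C x^{(t)}`.
Comparable numbers have comparable base-10 exponents.
-/

theorem le_mul_and_le_mul_of_logBounded {c y r : ℝ} (hc : 0 < c) (hy : 0 ≤ y) (hr : 0 ≤ r)
    (h : |y| / c ≤ |r| ∧ |r| ≤ c * |y|) : r ≤ c * y ∧ y ≤ c * r := by
  rw [abs_of_nonneg hy, abs_of_nonneg hr, div_le_iff₀' hc] at h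
  exact h.symm

namespace Matrix

variable {n R : Type*} [Fintype n]

section OrderedCommRing

variable [CommRing R] [PartialOrder R] [IsOrderedRing R] {M : Matrix n n R}

theorem mulVec_mono_of_nonneg (hM : ∀ i j, 0 ≤ M i j) {v w : n → R} (h : v ≤ w) :
    M *ᵥ v ≤ M *ᵥ w := fun i =>
  Finset.sum_le_sum fun j _ => mul_le_mul_of_nonneg_left (h j) (hM i j)

theorem mulVec_apply_le_mul_mulVec_apply {v : n → R} (hv : 0 ≤ v) {K : R} {q q' : n}
    (hM : ∀ j, M q j ≤ K * M q' j) : (M *ᵥ v) q ≤ K * (M *ᵥ v) q' := by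
  simp only [mulVec, dotProduct, Finset.mul_sum, ← mul_assoc]
  exact Finset.sum_le_sum fun j _ => mul_le_mul_of_nonneg_right (hM j) (hv j)

theorem apply_le_pow_smul_pow_mulVec [DecidableEq n] (hM : ∀ i j, 0 ≤ M i j) {c : R}
    (hc : 0 ≤ c) {x : ℕ → n → R} (hx : ∀ t, x (t + 1) ≤ c • M *ᵥ x t) (t s : ℕ) :
    x (t + s) ≤ c ^ s • (M ^ s) *ᵥ x t := by
  induction s with
  | zero => simp
  | succ s ih =>
    calc x (t + (s + 1)) ≤ c • M *ᵥ x (t + s) := hx (t + s)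
      _ ≤ c • M *ᵥ (c ^ s • (M ^ s) *ᵥ x t) :=
        smul_le_smul_of_nonneg_left (mulVec_mono_of_nonneg hM ih) hc
      _ = c ^ (s + 1) • (M ^ (s + 1)) *ᵥ x t := by
        rw [mulVec_smul, mulVec_mulVec, smul_smul, ← pow_succ', ← pow_succ']

theorem pow_mulVec_le_pow_smul_apply [DecidableEq n] (hM : ∀ i j, 0 ≤ M i j) {c : R}
    (hc : 0 ≤ c) {x : ℕ → n → R} (hx : ∀ t, M *ᵥ x t ≤ c • x (t + 1)) (t s : ℕ) :
    (M ^ s) *ᵥ x t ≤ c ^ s • x (t + s) := by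
  induction s with
  | zero => simp
  | succ s ih =>
    calc (M ^ (s + 1)) *ᵥ x t = M *ᵥ (M ^ s) *ᵥ x t := by rw [mulVec_mulVec, ← pow_succ']
      _ ≤ M *ᵥ (c ^ s • x (t + s)) := mulVec_mono_of_nonneg hM ih
      _ ≤ c ^ s • c • x (t + s + 1) := by
        rw [mulVec_smul]
        exact smul_le_smul_of_nonneg_left (hx (t + s)) (pow_nonneg hc s)
      _ = c ^ (s + 1) • x (t + (s + 1)) := by rw [smul_smul, ← pow_succ, add_assoc]

end OrderedCommRing

section OrderedField

variable [Field R] [LinearOrder R] [IsStrictOrderedRing R] [DecidableEq n] {M : Matrix n n R}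

theorem pow_apply_le_card_mul_pow (hM : ∀ i j, 0 ≤ M i j) {m : R} (hMm : ∀ i j, M i j ≤ m)
    (k : ℕ) (i j : n) : (M ^ k) i j ≤ (Fintype.card n * m) ^ k := by
  induction k generalizing j with
  | zero => by_cases h : i = j <;> simp [h]
  | succ k ih =>
    calc (M ^ (k + 1)) i j = ∑ l, (M ^ k) i l * M l j := by rw [pow_succ, mul_apply]
      _ ≤ Fintype.card n • ((Fintype.card n * m) ^ k * m) :=
        Finset.sum_le_card_nsmul _ _ _ fun l _ => mul_le_mul (ih l) (hMm l j) (hM l j)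
          ((pow_apply_nonneg hM k i l).trans (ih l))
      _ = (Fintype.card n * m) ^ (k + 1) := by rw [nsmul_eq_mul]; ring

theorem pow_le_pow_apply_of_pos (hM : ∀ i j, 0 ≤ M i j) {b : R} (hb : 0 ≤ b)
    (hMb : ∀ i j, 0 < M i j → b ≤ M i j) (k : ℕ) (i j : n) (hk : 0 < (M ^ k) i j) :
    b ^ k ≤ (M ^ k) i j := by
  induction k generalizing j with
  | zero => by_cases h : i = j <;> simp_all
  | succ k ih =>
    have hterm : ∀ l, 0 ≤ (M ^ k) i l * M l j := fun l =>
      mul_nonneg (pow_apply_nonneg hM k i l) (hM l j)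
    rw [pow_succ M k, mul_apply] at hk ⊢
    obtain ⟨l, -, hl⟩ := (Finset.sum_pos_iff_of_nonneg fun l _ => hterm l).mp hk
    have hMk : 0 < (M ^ k) i l := (pow_apply_nonneg hM k i l).lt_of_ne
      (by rintro h; simp [← h] at hl)
    have hMl : 0 < M l j := (hM l j).lt_of_ne (by rintro h; simp [← h] at hl)
    calc b ^ (k + 1) = b ^ k * b := pow_succ b k
      _ ≤ (M ^ k) i l * M l j := mul_le_mul (ih l hMk) (hMb l j hMl) hb hMk.le
      _ ≤ ∑ l, (M ^ k) i l * M l j :=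
        Finset.single_le_sum (fun l _ => hterm l) (Finset.mem_univ l)

theorem pow_apply_le_mul_pow_apply (hM : ∀ i j, 0 ≤ M i j) {m : R} (hm : 0 < m)
    (hMm : ∀ i j, M i j ≤ m) (hMm' : ∀ i j, 0 < M i j → m⁻¹ ≤ M i j) (k : ℕ) (i i' j : n)
    (hk : 0 < (M ^ k) i' j) :
    (M ^ k) i j ≤ Fintype.card n ^ k * m ^ (2 * k) * (M ^ k) i' j := by
  have hlow := pow_le_pow_apply_of_pos hM (inv_nonneg.mpr hm.le) hMm' k i' j hk
  rw [inv_pow, inv_le_iff_one_le_mul₀' (pow_pos hm k)] at hlow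
  calc (M ^ k) i j ≤ (Fintype.card n * m) ^ k := pow_apply_le_card_mul_pow hM hMm k i j
    _ ≤ (Fintype.card n * m) ^ k * (m ^ k * (M ^ k) i' j) :=
      le_mul_of_one_le_right (by positivity) hlow
    _ = Fintype.card n ^ k * m ^ (2 * k) * (M ^ k) i' j := by ring

end OrderedField

theorem rounded_orbit_bounds {c : ℝ} (hc : 0 < c) {round : ℝ → ℝ}
    (hround : ∀ y : ℝ, |y| / c ≤ |round y| ∧ |round y| ≤ c * |y|)
    {M : Matrix n n ℝ} (hM : ∀ i j, 0 ≤ M i j) {x : ℕ → n → ℝ} (hx : ∀ t i, 0 ≤ x t i)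
    (horbit : ∀ t i, x (t + 1) i = round ((M *ᵥ x t) i)) :
    (∀ t, x (t + 1) ≤ c • M *ᵥ x t) ∧ ∀ t, M *ᵥ x t ≤ c • x (t + 1) := by
  have key : ∀ t i, x (t + 1) i ≤ c * (M *ᵥ x t) i ∧ (M *ᵥ x t) i ≤ c * x (t + 1) i := by
    intro t i
    have hMx : 0 ≤ (M *ᵥ x t) i := Finset.sum_nonneg fun j _ => mul_nonneg (hM i j) (hx t j)
    have hround_nonneg : 0 ≤ round ((M *ᵥ x t) i) := horbit t i ▸ hx (t + 1) i
    rw [horbit]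
    exact le_mul_and_le_mul_of_logBounded hc hMx hround_nonneg (hround _)
  exact ⟨fun t i => (key t i).1, fun t i => (key t i).2⟩

end Matrix

theorem zpow_sub_one_le_and_lt_zpow {B a μ : ℝ} {e : ℤ} (hB : 0 < B) (ha : a = μ * B ^ e)
    (hμ : μ ∈ Set.Ico B⁻¹ 1) : B ^ (e - 1) ≤ a ∧ a < B ^ e := by
  subst ha
  refine ⟨?_, mul_lt_of_lt_one_left (zpow_pos hB e) hμ.2⟩
  rw [zpow_sub_one₀ hB.ne', mul_comm]
  exact mul_le_mul_of_nonneg_right hμ.1 (zpow_nonneg hB.le e)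

theorem sub_lt_ceil_logb_add_one {B R a b : ℝ} {e f : ℤ} (hB : 1 < B) (ha : B ^ (e - 1) ≤ a)
    (hb : 0 < b) (hbf : b < B ^ f) (hab : a / b ≤ R) : e - f < ⌈Real.logb B R⌉ + 1 := by
  have hB0 : 0 < B := zero_lt_one.trans hB
  have ha0 : 0 < a := (zpow_pos hB0 _).trans_le ha
  have hlt : B ^ (e - 1 - f) < R := calc
    B ^ (e - 1 - f) = B ^ (e - 1) / B ^ f := zpow_sub₀ hB0.ne' _ _
    _ ≤ a / B ^ f := div_le_div_of_nonneg_right ha (zpow_nonneg hB0.le f)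
    _ < a / b := div_lt_div_of_pos_left ha0 hb hbf
    _ ≤ R := hab
  have hR : 0 < R := (zpow_pos hB0 _).trans hlt
  have : e - 1 - f < ⌈Real.logb B R⌉ := by
    rw [Int.lt_ceil, Real.lt_logb_iff_rpow_lt hB hR, Real.rpow_intCast]
    exact hlt
  omega

open Matrix

theorem rounded_orbit_coordinates_close_general (d : ℕ) (C : ℕ)
    (c m : ℝ) (hc : 1 ≤ c) (hm : 0 < m)
    (round : ℝ → ℝ)
    (hlog : ∀ y : ℝ, |y| / c ≤ |round y| ∧ |round y| ≤ c * |y|)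
    (M : Matrix (Fin d) (Fin d) ℝ) (hMnn : ∀ i j, 0 ≤ M i j)
    (hMm : ∀ i j, M i j ≠ 0 → 1 / m ≤ M i j ∧ M i j ≤ m)
    (hMC : ∀ i j, 0 < (M ^ C) i j)
    (x : ℕ → Fin d → ℝ) (hpos : ∀ t i, 0 < x t i)
    (horbit : ∀ t i, x (t + 1) i = round (∑ j, M i j * x t j)) :
    (∀ (t : ℕ) (q q' : Fin d),
        x (t + C) q / x (t + C) q' ≤ (d : ℝ) ^ C * (m * c) ^ (2 * C)) ∧
    (∀ (t : ℕ) (q q' : Fin d) (mq mq' : ℝ) (eq eq' : ℤ),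
        x (t + C) q = mq * (10:ℝ) ^ eq → mq ∈ Set.Ico (0.1 : ℝ) 1 →
        x (t + C) q' = mq' * (10:ℝ) ^ eq' → mq' ∈ Set.Ico (0.1 : ℝ) 1 →
        |eq - eq'| < ⌈Real.logb 10 ((d : ℝ) ^ C * (m * c) ^ (2 * C))⌉ + 2) := by
  have hc0 : 0 < c := one_pos.trans_le hc
  have hMle : ∀ i j, M i j ≤ m := fun i j =>
    (eq_or_ne (M i j) 0).elim (fun h => h ▸ hm.le) fun h => (hMm i j h).2
  have hMge : ∀ i j, 0 < M i j → m⁻¹ ≤ M i j := fun i j h => one_div m ▸ (hMm i j h.ne').1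
  obtain ⟨hup, hdown⟩ := rounded_orbit_bounds hc0 hlog hMnn (fun t i => (hpos t i).le) horbit
  have ratio : ∀ t q q', x (t + C) q / x (t + C) q' ≤ (d : ℝ) ^ C * (m * c) ^ (2 * C) := by
    intro t q q'
    rw [div_le_iff₀ (hpos _ q')]
    calc x (t + C) q ≤ c ^ C * ((M ^ C) *ᵥ x t) q :=
          apply_le_pow_smul_pow_mulVec hMnn hc0.le hup t C q
      _ ≤ c ^ C * ((d : ℝ) ^ C * m ^ (2 * C) * ((M ^ C) *ᵥ x t) q') := by
        gcongr
        refine mulVec_apply_le_mul_mulVec_apply (fun j => (hpos t j).le) fun j => ?_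
        simpa using pow_apply_le_mul_pow_apply hMnn hm hMle hMge C q q' j (hMC q' j)
      _ ≤ c ^ C * ((d : ℝ) ^ C * m ^ (2 * C) * (c ^ C * x (t + C) q')) := by
        gcongr
        exact pow_mulVec_le_pow_smul_apply hMnn hc0.le hdown t C q'
      _ = (d : ℝ) ^ C * (m * c) ^ (2 * C) * x (t + C) q' := by ring
  refine ⟨ratio, fun t q q' mq mq' e e' hq hmq hq' hmq' => ?_⟩
  rw [show (0.1 : ℝ) = 10⁻¹ by norm_num] at hmq hmq'
  obtain ⟨hq_ge, hq_lt⟩ := zpow_sub_one_le_and_lt_zpow (by norm_num) hq hmq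
  obtain ⟨hq'_ge, hq'_lt⟩ := zpow_sub_one_le_and_lt_zpow (by norm_num) hq' hmq'
  have h := sub_lt_ceil_logb_add_one (by norm_num) hq_ge (hpos _ q') hq'_lt (ratio t q q')
  have h' := sub_lt_ceil_logb_add_one (by norm_num) hq'_ge (hpos _ q) hq_lt (ratio t q' q)
  rw [abs_sub_lt_iff]
  omega

/-- For a rounded orbit of a nonnegative matrix `M` whose `C`-th power is entrywise
positive, under a log-bounded, sign-preserving rounding function, the ratio of any
two coordinates at time `t + C` is at most `d^C (mc)^{2C}`; hence all coordinates
are β-close (have base-10 exponents within `β = ⌈log₁₀(d^C (mc)^{2C})⌉ + 2` of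
each other). -/
theorem rounded_orbit_coordinates_close (d : ℕ) (hd : 0 < d) (C : ℕ)
    (c m : ℝ) (hc : 1 ≤ c) (hm : 0 < m)
    (round : ℝ → ℝ)
    (hlog : ∀ y : ℝ, |y| / c ≤ |round y| ∧ |round y| ≤ c * |y|)
    (hsign : ∀ y : ℝ, Real.sign (round y) = Real.sign y)
    (M : Matrix (Fin d) (Fin d) ℝ) (hMnn : ∀ i j, 0 ≤ M i j)
    (hMm : ∀ i j, M i j ≠ 0 → 1 / m ≤ M i j ∧ M i j ≤ m)
    (hMC : ∀ i j, 0 < (M ^ C) i j)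
    (x : ℕ → Fin d → ℝ) (hpos : ∀ t i, 0 < x t i)
    (horbit : ∀ t i, x (t + 1) i = round (∑ j, M i j * x t j)) :
    (∀ (t : ℕ) (q q' : Fin d),
        x (t + C) q / x (t + C) q' ≤ (d : ℝ) ^ C * (m * c) ^ (2 * C)) ∧
    (∀ (t : ℕ) (q q' : Fin d) (mq mq' : ℝ) (eq eq' : ℤ),
        x (t + C) q = mq * (10:ℝ) ^ eq → mq ∈ Set.Ico (0.1 : ℝ) 1 →
        x (t + C) q' = mq' * (10:ℝ) ^ eq' → mq' ∈ Set.Ico (0.1 : ℝ) 1 →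
        |eq - eq'| < ⌈Real.logb 10 ((d : ℝ) ^ C * (m * c) ^ (2 * C))⌉ + 2) :=
  rounded_orbit_coordinates_close_general d C c m hc hm round hlog M hMnn hMm hMC x hpos horbit
end

section
/- Let (x^{(t)}) be a sequence of vectors of precision-p floating-point numbers such that (a) the rounding function is mantissa-based ([10^α·x] = 10^α·[x]), and (b) for all t ≥ C, the exponents of all coordinates of x^{(t)} lie within β of the exponent of the first coordinate. Then there exist N ≥ C, T ≥ 1 with N, T ≤ C + 10^{pm}(2β+1)^m + 1 (m the dimension), and α ∈ ℤ, such that x^{(t+T)} = 10^α · x^{(t)} for all t ≥ N. -/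
/-!
Since rounding commutes with scaling by powers of ten, so does the step `v ↦ [M v]`; hence once
`x^{(s+T)} = 10^α x^{(s)}` holds for one `s`, it holds for every later time. Such an `s` exists by
pigeonhole: a vector of precision-`p` floats is determined up to a common power of ten by its
mantissas and its exponents relative to the first coordinate, and from time `C` on these range
over at most `10^{pm}(2β+1)^m` values.
-/

open Finset Matrix

section ScaledOrbit

variable {V S : Type*} [SMul S V]

theorem orbit_add_eq_smul_of_map_smul (f : V → V) (c : S) (hf : ∀ v, f (c • v) = c • f v)
    (x : ℕ → V) (hx : ∀ t, x (t + 1) = f (x t)) {s T : ℕ} (hs : x (s + T) = c • x s) :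
    ∀ t, s ≤ t → x (t + T) = c • x t := by
  refine Nat.le_induction hs fun t _ ih => ?_
  rw [Nat.add_right_comm, hx, hx, ih, hf]

end ScaledOrbit

def roundedMulVec {n : Type*} [Fintype n] (round : ℝ → ℝ) (M : Matrix n n ℝ) (v : n → ℝ) :
    n → ℝ :=
  fun i => round ((M *ᵥ v) i)

theorem roundedMulVec_zpow_smul {n : Type*} [Fintype n] {round : ℝ → ℝ}
    (hround : ∀ (α : ℤ) (y : ℝ), round ((10 : ℝ) ^ α * y) = (10 : ℝ) ^ α * round y)
    (M : Matrix n n ℝ) (α : ℤ) (v : n → ℝ) :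
    roundedMulVec round M ((10 : ℝ) ^ α • v) = (10 : ℝ) ^ α • roundedMulVec round M v := by
  ext i
  simp only [roundedMulVec, mulVec_smul, Pi.smul_apply, smul_eq_mul, hround]

theorem exists_lt_le_map_eq_of_mapsTo {S : Type*} (g : ℕ → S) (C : ℕ) (s : Finset S)
    (hg : ∀ n, C ≤ n → g n ∈ s) : ∃ a b, C ≤ a ∧ a < b ∧ b ≤ C + #s ∧ g a = g b := by
  have hcard : #s < #(Icc C (C + #s)) := by simp only [Nat.card_Icc]; omega
  obtain ⟨a, ha, b, hb, hab, hgab⟩ := exists_ne_map_eq_of_card_lt_of_maps_to hcard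
    (f := g) fun n hn => hg n (mem_Icc.mp hn).1
  rw [mem_Icc] at ha hb
  rcases lt_or_gt_of_ne hab with h | h
  · exact ⟨a, b, ha.1, h, hb.2, hgab⟩
  · exact ⟨b, a, hb.1, h, ha.2, hgab.symm⟩

noncomputable def mantissas (p : ℕ) : Finset ℝ :=
  (range (10 ^ p)).image fun k : ℕ => (k : ℝ) / 10 ^ p

theorem card_mantissas_le (p : ℕ) : #(mantissas p) ≤ 10 ^ p :=
  card_image_le.trans (card_range _).le

theorem mem_mantissas {p : ℕ} {m : ℝ} (hm : m ∈ Set.Ico (0 : ℝ) 1) {k : ℤ}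
    (hk : m = k / 10 ^ p) : m ∈ mantissas p := by
  have h10 : (0 : ℝ) < 10 ^ p := by positivity
  rw [hk, Set.mem_Ico, le_div_iff₀ h10, div_lt_one h10, zero_mul] at hm
  have hk0 : 0 ≤ k := by exact_mod_cast hm.1
  have hklt : k < 10 ^ p := by exact_mod_cast hm.2
  refine mem_image.mpr ⟨k.toNat, mem_range.mpr (by zify; rwa [Int.toNat_of_nonneg hk0]), ?_⟩
  rw [hk, ← Int.cast_natCast, Int.toNat_of_nonneg hk0]

theorem mul_zpow_eq_zpow_smul_of_sub_eq {ι : Type*} {b : ℝ} (hb : b ≠ 0) (m : ι → ℝ) (e e' : ι → ℤ)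
    (i₀ : ι) (he : ∀ i, e i - e i₀ = e' i - e' i₀) :
    (fun i => m i * b ^ e' i) = b ^ (e' i₀ - e i₀) • fun i => m i * b ^ e i := by
  ext i
  have hei : e' i = e' i₀ - e i₀ + e i := by linarith [he i]
  rw [Pi.smul_apply, smul_eq_mul, hei, zpow_add₀ hb]
  ring

noncomputable def floatStates (ι : Type*) [Fintype ι] [DecidableEq ι] (p β : ℕ) :
    Finset (ι → ℝ × ℤ) :=
  Fintype.piFinset fun _ => mantissas p ×ˢ Icc (-(β : ℤ)) β

theorem card_floatStates_le (ι : Type*) [Fintype ι] [DecidableEq ι] (p β : ℕ) :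
    #(floatStates ι p β) ≤ 10 ^ (p * Fintype.card ι) * (2 * β + 1) ^ Fintype.card ι := by
  have hIcc : #(Icc (-(β : ℤ)) β) = 2 * β + 1 := by rw [Int.card_Icc]; omega
  rw [floatStates, Fintype.card_piFinset, prod_const, card_univ, pow_mul, ← mul_pow, card_product,
    hIcc]
  gcongr
  exact card_mantissas_le p

/-- Pigeonhole pseudo-periodicity: if a rounded orbit `x^{(t+1)} = [M x^{(t)}]` of
precision-`p` floating-point vectors (with a mantissa-based rounding function)
has, from time `C` on, all coordinate exponents within `β` of the exponent of the
first coordinate, then there exist `N ≥ C`, `T ≥ 1` with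
`N, T ≤ C + 10^{pm}(2β+1)^m + 1` (`m` the dimension) and `α ∈ ℤ` such that
`x^{(t+T)} = 10^α · x^{(t)}` for all `t ≥ N`. -/
theorem orbit_pseudo_periodic (p md : ℕ) (hmd : 0 < md) (C β : ℕ)
    (round : ℝ → ℝ)
    (hmb : ∀ (α : ℤ) (y : ℝ), round ((10:ℝ) ^ α * y) = (10:ℝ) ^ α * round y)
    (M : Matrix (Fin md) (Fin md) ℝ)
    (x : ℕ → Fin md → ℝ)
    (horbit : ∀ t i, x (t + 1) i = round (∑ j, M i j * x t j))
    (man : ℕ → Fin md → ℝ) (ex : ℕ → Fin md → ℤ)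
    (hrep : ∀ t i, x t i = man t i * (10:ℝ) ^ ex t i)
    (hman : ∀ t i, man t i ∈ Set.Ico (0.1 : ℝ) 1)
    (hdig : ∀ t i, ∃ k : ℤ, man t i = (k : ℝ) / 10 ^ p)
    (hclose : ∀ t, C ≤ t → ∀ i, |ex t i - ex t ⟨0, hmd⟩| ≤ (β : ℤ)) :
    ∃ (N T : ℕ) (α : ℤ), C ≤ N ∧ 1 ≤ T ∧
      N ≤ C + 10 ^ (p * md) * (2 * β + 1) ^ md + 1 ∧
      T ≤ C + 10 ^ (p * md) * (2 * β + 1) ^ md + 1 ∧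
      ∀ t, N ≤ t → ∀ i, x (t + T) i = (10:ℝ) ^ α * x t i := by
  set i₀ : Fin md := ⟨0, hmd⟩
  have hstates :
      ∀ t, C ≤ t → (fun i => (man t i, ex t i - ex t i₀)) ∈ floatStates (Fin md) p β :=
    fun t ht => Fintype.mem_piFinset.mpr fun i => mem_product.mpr
      ⟨mem_mantissas (Set.Ico_subset_Ico_left (by norm_num) (hman t i)) (hdig t i).choose_spec,
        mem_Icc.mpr (abs_le.mp (hclose t ht i))⟩
  obtain ⟨a, b, hCa, hab, hbC, hstate⟩ := exists_lt_le_map_eq_of_mapsTo _ C _ hstates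
  have hcard := card_floatStates_le (Fin md) p β
  rw [Fintype.card_fin] at hcard
  set α := ex b i₀ - ex a i₀
  have hperiod : x (a + (b - a)) = (10 : ℝ) ^ α • x a := by
    have hman_eq : man b = man a := funext fun i => (congrArg Prod.fst (congrFun hstate i)).symm
    rw [Nat.add_sub_cancel' hab.le, funext (hrep a), funext (hrep b), hman_eq]
    exact mul_zpow_eq_zpow_smul_of_sub_eq (by norm_num) _ _ _ i₀
      fun i => congrArg Prod.snd (congrFun hstate i)
  have hscaled := orbit_add_eq_smul_of_map_smul _ _ (roundedMulVec_zpow_smul hmb M α) x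
    (fun t => funext (horbit t)) hperiod
  exact ⟨a, b - a, α, hCa, by omega, by omega, by omega,
    fun t ht i => congrFun (hscaled t ht) i⟩
end
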